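/- arXiv:math/0411229 — 2 statements merged into one kernel-verified Lean document; each statement's English description precedes it below -/
import Mathlib

section
/- Let i be a positive integer and a ≥ 1. If ((a+1)_(i))^{-1}_{-1} > (a_(i))^{-1}_{-1}, then in fact ((a+1)_(i))^{-1}_{-1} = (a_(i))^{-1}_{-1} + 1. -/
/-- `IsMacExp n i j f` says that `n = C(f i, i) + C(f (i-1), i-1) + ... + C(f j, j)`
is the `i`-binomial (Macaulay) expansion of `n`, i.e. `f i > f (i-1) > ... > f j ≥ j ≥ 1`. -/
def IsMacExp (n i j : ℕ) (f : ℕ → ℕ) : Prop :=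
  1 ≤ j ∧ j ≤ i ∧ j ≤ f j ∧ (∀ k, j ≤ k → k < i → f k < f (k + 1)) ∧
    n = ∑ k ∈ Finset.Icc j i, (f k).choose k

/-- The upper shift `(n_(i))^{+1}_{+1}` of an expansion. -/
def macUp (i j : ℕ) (f : ℕ → ℕ) : ℕ := ∑ k ∈ Finset.Icc j i, (f k + 1).choose (k + 1)

/-- The lower shift `(n_(i))^{-1}_{-1}` of an expansion. -/
def macDown (i j : ℕ) (f : ℕ → ℕ) : ℕ := ∑ k ∈ Finset.Icc j i, (f k - 1).choose (k - 1)

section MacHelpers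
open Finset

lemma Icc_eq_Ico' (a b : ℕ) : Icc a b = Ico a (b+1) := by
  rw [Nat.Icc_eq_range', Nat.Ico_eq_range']

lemma sum_Icc_split (g : ℕ → ℕ) {j m i : ℕ} (h1 : j ≤ m) (h2 : m ≤ i) :
    ∑ k ∈ Icc j i, g k = ∑ k ∈ Icc j m, g k + ∑ k ∈ Icc (m+1) i, g k := by
  rw [Icc_eq_Ico', Icc_eq_Ico', Icc_eq_Ico',
    Finset.sum_Ico_consecutive g (by omega) (by omega)]

lemma sum_Icc_bot (g : ℕ → ℕ) {j i : ℕ} (h : j ≤ i) :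
    ∑ k ∈ Icc j i, g k = g j + ∑ k ∈ Icc (j+1) i, g k := by
  rw [Icc_eq_Ico', Icc_eq_Ico', Finset.sum_eq_sum_Ico_succ_bot (by omega) g]

lemma sum_Icc_top (g : ℕ → ℕ) {j i : ℕ} (h : j ≤ i) (h1 : 1 ≤ i) :
    ∑ k ∈ Icc j i, g k = ∑ k ∈ Icc j (i-1), g k + g i := by
  rcases Nat.eq_or_lt_of_le h with rfl | h'
  · have : Icc j (j-1) = ∅ := by
      apply Finset.Icc_eq_empty; omega
    rw [this]
    simp [Finset.Icc_self, Nat.sub_add_cancel h1]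
  · rw [sum_Icc_split g (show j ≤ i-1 by omega) (by omega)]
    congr 1
    have : i - 1 + 1 = i := by omega
    rw [this, Finset.Icc_self, Finset.sum_singleton]

-- f k ≥ k
lemma mac_ge {j i : ℕ} {f : ℕ → ℕ} (hj : j ≤ f j)
    (hmono : ∀ k, j ≤ k → k < i → f k < f (k+1)) :
    ∀ k, j ≤ k → k ≤ i → k ≤ f k := by
  intro k hjk hki
  induction k with
  | zero => omega
  | succ n ih =>
    rcases Nat.eq_or_lt_of_le hjk with h | h
    · rw [← h]; exact hj
    · have h1 := hmono n (by omega) (by omega)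
      have h2 := ih (by omega) (by omega)
      omega

-- tail bound
lemma mac_lt {j : ℕ} {f : ℕ → ℕ} (hj1 : 1 ≤ j) (hj : j ≤ f j) :
    ∀ m, j ≤ m → (∀ k, j ≤ k → k < m → f k < f (k+1)) →
      ∑ k ∈ Icc j m, (f k).choose k < (f m + 1).choose m := by
  intro m
  induction m with
  | zero => omega
  | succ n ih =>
    intro hjm hmono
    rcases Nat.eq_or_lt_of_le hjm with h | h
    · rw [← h, Finset.Icc_self, Finset.sum_singleton]
      have h1 : (f j + 1).choose j = (f j).choose (j-1) + (f j).choose j := by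
        have : j - 1 + 1 = j := by omega
        rw [← this, Nat.choose_succ_succ]
        simp [Nat.succ_eq_add_one, this]
      have h2 : 0 < (f j).choose (j-1) := Nat.choose_pos (by omega)
      omega
    · have hjn : j ≤ n := by omega
      have ihn := ih hjn (fun k hk hk' => hmono k hk (by omega))
      rw [sum_Icc_top _ (by omega) (by omega)]
      simp only [Nat.add_sub_cancel]
      have hfn : f n + 1 ≤ f (n+1) := hmono n hjn (by omega)
      have h1 : (f n + 1).choose n ≤ (f (n+1)).choose n := Nat.choose_le_choose n hfn
      have h2 : (f (n+1) + 1).choose (n+1) = (f (n+1)).choose n + (f (n+1)).choose (n+1) :=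
        Nat.choose_succ_succ _ _
      omega

lemma mac_top_eq {n i j j' : ℕ} {f f' : ℕ → ℕ} (h1 : IsMacExp n i j f)
    (h2 : IsMacExp n i j' f') : f i = f' i := by
  obtain ⟨hj1, hji, hjf, hmono, hsum⟩ := h1
  obtain ⟨hj1', hji', hjf', hmono', hsum'⟩ := h2
  by_contra hne
  -- wlog f i < f' i
  rcases Nat.lt_or_ge (f i) (f' i) with h | h
  · have hub : n < (f i + 1).choose i := hsum ▸ mac_lt hj1 hjf i hji hmono
    have hlb : (f' i).choose i ≤ n := by
      rw [hsum', sum_Icc_top _ hji' (by omega)]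
      omega
    have := Nat.choose_le_choose i (show f i + 1 ≤ f' i by omega)
    omega
  · have hub : n < (f' i + 1).choose i := hsum' ▸ mac_lt hj1' hjf' i hji' hmono'
    have hlb : (f i).choose i ≤ n := by
      rw [hsum, sum_Icc_top _ hji (by omega)]
      omega
    have := Nat.choose_le_choose i (show f' i + 1 ≤ f i by omega)
    omega

lemma mac_unique : ∀ i n j f j' f', IsMacExp n i j f → IsMacExp n i j' f' →
    j = j' ∧ ∀ k, j ≤ k → k ≤ i → f k = f' k := by
  intro i
  induction i with
  | zero => intro n j f j' f' h1 _; obtain ⟨a, b, _⟩ := h1; omega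
  | succ m ih =>
    intro n j f j' f' h1 h2
    have htop : f (m+1) = f' (m+1) := mac_top_eq h1 h2
    obtain ⟨hj1, hji, hjf, hmono, hsum⟩ := h1
    obtain ⟨hj1', hji', hjf', hmono', hsum'⟩ := h2
    by_cases hjm : j = m + 1
    · by_cases hjm' : j' = m + 1
      · subst hjm hjm'
        exact ⟨rfl, fun k hk hk' => by have hkk : k = m + 1 := by omega
                                       rw [hkk, htop]⟩
      · -- j = m+1, j' < m+1 : contradiction
        exfalso
        have hj'm : j' ≤ m := by omega
        have hpos : 0 < (f' j').choose j' := Nat.choose_pos hjf'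
        have h1' : n = (f j).choose j := by rw [hsum, hjm, Finset.Icc_self, Finset.sum_singleton]
        have h2' : n = ∑ k ∈ Icc j' m, (f' k).choose k + (f' (m+1)).choose (m+1) := by
          rw [hsum', sum_Icc_top _ hji' (by omega)]; simp
        have h3 : 0 < ∑ k ∈ Icc j' m, (f' k).choose k :=
          Finset.sum_pos' (fun k _ => Nat.zero_le _) ⟨j', Finset.mem_Icc.mpr ⟨le_refl _, hj'm⟩, hpos⟩
        rw [h1', hjm, htop] at h2'
        omega
    · by_cases hjm' : j' = m + 1
      · exfalso
        have hj'm : j ≤ m := by omega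
        have hpos : 0 < (f j).choose j := Nat.choose_pos hjf
        have h1' : n = (f' j').choose j' := by rw [hsum', hjm', Finset.Icc_self, Finset.sum_singleton]
        have h2' : n = ∑ k ∈ Icc j m, (f k).choose k + (f (m+1)).choose (m+1) := by
          rw [hsum, sum_Icc_top _ hji (by omega)]; simp
        have h3 : 0 < ∑ k ∈ Icc j m, (f k).choose k :=
          Finset.sum_pos' (fun k _ => Nat.zero_le _) ⟨j, Finset.mem_Icc.mpr ⟨le_refl _, hj'm⟩, hpos⟩
        rw [h1', hjm', htop] at h2'
        omega
      · -- both tails : use ih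
        have hE : ∑ k ∈ Icc j m, (f k).choose k = ∑ k ∈ Icc j' m, (f' k).choose k := by
          have e1 : n = ∑ k ∈ Icc j m, (f k).choose k + (f (m+1)).choose (m+1) := by
            rw [hsum, sum_Icc_top _ hji (by omega)]; simp
          have e2 : n = ∑ k ∈ Icc j' m, (f' k).choose k + (f' (m+1)).choose (m+1) := by
            rw [hsum', sum_Icc_top _ hji' (by omega)]; simp
          rw [htop] at e1
          omega
        have hm1 : IsMacExp (∑ k ∈ Icc j m, (f k).choose k) m j f :=
          ⟨hj1, by omega, hjf, fun k hk hk' => hmono k hk (by omega), rfl⟩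
        have hm2 : IsMacExp (∑ k ∈ Icc j m, (f k).choose k) m j' f' :=
          ⟨hj1', by omega, hjf', fun k hk hk' => hmono' k hk (by omega), hE⟩
        obtain ⟨hjj, hff⟩ := ih _ _ _ _ _ hm1 hm2
        refine ⟨hjj, fun k hk hk' => ?_⟩
        rcases Nat.lt_or_ge k (m+1) with h | h
        · exact hff k hk (by omega)
        · have : k = m + 1 := by omega
          rw [this, htop]

lemma hockey (c : ℕ) : ∀ m, ∑ k ∈ range (m+1), (c+k).choose k = (c+m+1).choose m := by
  intro m
  induction m with
  | zero => simp
  | succ n ih =>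
    rw [Finset.sum_range_succ, ih, show c+(n+1) = c+n+1 from by ring]
    exact (Nat.choose_succ_succ (c+n+1) n).symm

lemma hockey_Icc (c m : ℕ) (hm : 1 ≤ m) :
    1 + ∑ k ∈ Icc 1 m, (c+k).choose k = (c+m+1).choose m := by
  rw [← hockey c m, Finset.range_eq_Ico,
    Finset.sum_eq_sum_Ico_succ_bot (show (0:ℕ) < m+1 by omega) (fun k => (c+k).choose k),
    Icc_eq_Ico']
  simp

lemma macDown_congr {i j : ℕ} {f g : ℕ → ℕ} (h : ∀ k, j ≤ k → k ≤ i → f k = g k) :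
    macDown i j f = macDown i j g := by
  unfold macDown
  apply Finset.sum_congr rfl
  intro k hk
  rw [Finset.mem_Icc] at hk
  rw [h k hk.1 hk.2]

lemma step_case2 {a i j : ℕ} {f : ℕ → ℕ} (h : IsMacExp a i j f) (hj2 : 2 ≤ j) :
    IsMacExp (a+1) i (j-1) (fun k => if k = j-1 then j-1 else f k) ∧
    macDown i (j-1) (fun k => if k = j-1 then j-1 else f k) = macDown i j f + 1 := by
  obtain ⟨hj1, hji, hjf, hmono, hsum⟩ := h
  set g : ℕ → ℕ := fun k => if k = j-1 then j-1 else f k with hg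
  have hgj : g (j-1) = j-1 := by simp [hg]
  have hgf : ∀ k, j ≤ k → g k = f k := by
    intro k hk; simp only [hg]; rw [if_neg (by omega)]
  have hsplit : ∀ h' : ℕ → ℕ, ∑ k ∈ Icc (j-1) i, h' k = h' (j-1) + ∑ k ∈ Icc j i, h' k := by
    intro h'
    rw [sum_Icc_bot h' (by omega), show j - 1 + 1 = j by omega]
  constructor
  · refine ⟨by omega, by omega, by omega, ?_, ?_⟩
    · intro k hk hki
      by_cases hkj : k = j - 1
      · subst hkj
        rw [hgj, hgf _ (by omega), show j - 1 + 1 = j by omega]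
        omega
      · rw [hgf _ (by omega), hgf _ (by omega)]
        exact hmono k (by omega) hki
    · have hsc : ∑ k ∈ Icc j i, (g k).choose k = ∑ k ∈ Icc j i, (f k).choose k := by
        apply Finset.sum_congr rfl
        intro k hk
        rw [Finset.mem_Icc] at hk
        rw [hgf k hk.1]
      rw [hsplit, hgj, Nat.choose_self, hsc, ← hsum]
      omega
  · have hsc : ∑ k ∈ Icc j i, (g k - 1).choose (k - 1)
        = ∑ k ∈ Icc j i, (f k - 1).choose (k - 1) := by
      apply Finset.sum_congr rfl
      intro k hk
      rw [Finset.mem_Icc] at hk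
      rw [hgf k hk.1]
    unfold macDown
    rw [hsplit, hgj, hsc, show j - 1 - 1 = j - 2 by omega, Nat.choose_self]
    omega

lemma step_case1 {a i : ℕ} {f : ℕ → ℕ} (h : IsMacExp a i 1 f) :
    ∃ m g, IsMacExp (a+1) i m g ∧ macDown i m g = macDown i 1 f := by
  obtain ⟨hj1, hji, hjf, hmono, hsum⟩ := h
  set P : ℕ → Prop := fun k => ∀ l < k + 1, 1 ≤ l → f l = f 1 + (l - 1) with hP
  set m : ℕ := Nat.findGreatest P i with hm
  have hP1 : P 1 := by
    intro l hl hl1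
    have : l = 1 := by omega
    subst this
    simp
  have hm1 : 1 ≤ m := Nat.le_findGreatest hji hP1
  have hmi : m ≤ i := Nat.findGreatest_le i
  have hPm : P m := Nat.findGreatest_spec hji hP1
  have hfk : ∀ l, 1 ≤ l → l ≤ m → f l = f 1 + (l - 1) := fun l h1 h2 => hPm l (by omega) h1
  -- if m < i then f (m+1) ≥ f 1 + m + 1
  have hnext : m < i → f 1 + m + 1 ≤ f (m + 1) := by
    intro hlt
    have hnP : ¬ P (m + 1) := Nat.findGreatest_is_greatest (show Nat.findGreatest P i < m + 1 by omega) (by omega)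
    have hne : f (m+1) ≠ f 1 + m := by
      intro he
      apply hnP
      intro l hl hl1
      rcases Nat.lt_or_ge l (m+1) with h' | h'
      · exact hfk l hl1 (by omega)
      · have : l = m + 1 := by omega
        subst this
        rw [he]
        omega
    have hgt : f m < f (m+1) := hmono m hm1 hlt
    have := hfk m hm1 (le_refl _)
    omega
  set g : ℕ → ℕ := fun k => if k = m then f 1 + m else f k with hg
  have hgm : g m = f 1 + m := by simp [hg]
  have hgf : ∀ k, m < k → g k = f k := by
    intro k hk; simp only [hg]; rw [if_neg (by omega)]
  set c : ℕ := f 1 - 1 with hc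
  have hc1 : f 1 = c + 1 := by omega
  refine ⟨m, g, ⟨hm1, hmi, by rw [hgm]; omega, ?_, ?_⟩, ?_⟩
  · intro k hk hki
    by_cases hkm : k = m
    · subst hkm
      rw [hgm, hgf _ (by omega)]
      exact hnext hki
    · rw [hgf _ (by omega), hgf _ (by omega)]
      exact hmono k (by omega) hki
  · -- sum identity
    have e1 : ∑ k ∈ Icc 1 m, (f k).choose k = ∑ k ∈ Icc 1 m, (c + k).choose k := by
      apply Finset.sum_congr rfl
      intro k hk
      rw [Finset.mem_Icc] at hk
      rw [hfk k hk.1 hk.2]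
      congr 1
      omega
    have e2 : 1 + ∑ k ∈ Icc 1 m, (c + k).choose k = (c + m + 1).choose m := hockey_Icc c m hm1
    have e3 : (c + m + 1).choose m = (f 1 + m).choose m := by congr 1; omega
    rcases Nat.eq_or_lt_of_le hmi with hmeq | hmlt
    · -- m = i
      rw [← hmeq] at hsum ⊢
      rw [Finset.Icc_self, Finset.sum_singleton, hgm, hsum, e1]
      omega
    · rw [hsum, sum_Icc_split (fun k => (f k).choose k) hm1 hmi,
        sum_Icc_bot (fun k => (g k).choose k) hmi, hgm]
      have e4 : ∑ k ∈ Icc (m+1) i, (g k).choose k = ∑ k ∈ Icc (m+1) i, (f k).choose k := by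
        apply Finset.sum_congr rfl
        intro k hk
        rw [Finset.mem_Icc] at hk
        rw [hgf k (by omega)]
      rw [e4, e1]
      omega
  · -- macDown identity
    have e1 : ∑ k ∈ Icc 1 m, (f k - 1).choose (k - 1) = (c + m).choose (m - 1) := by
      have ec : ∀ k, 1 ≤ k → k ≤ m → (f k - 1).choose (k - 1) = (c + (k-1)).choose (k-1) := by
        intro k h1 h2
        rw [hfk k h1 h2]
        congr 1
        omega
      have estep : ∑ k ∈ Icc 1 m, (f k - 1).choose (k - 1)
          = ∑ k ∈ Icc 1 m, (c + (k-1)).choose (k-1) := by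
        apply Finset.sum_congr rfl
        intro k hk
        rw [Finset.mem_Icc] at hk
        exact ec k hk.1 hk.2
      rw [estep, Icc_eq_Ico',
        Finset.sum_Ico_eq_sum_range (fun k => (c + (k-1)).choose (k-1)) 1 (m+1)]
      have estep2 : ∑ t ∈ Finset.range (m + 1 - 1), (c + (1 + t - 1)).choose (1 + t - 1)
          = ∑ t ∈ Finset.range m, (c + t).choose t := by
        rw [show m + 1 - 1 = m by omega]
        apply Finset.sum_congr rfl
        intro t _
        congr 1 <;> omega
      rw [estep2]
      have := hockey c (m - 1)
      rw [show m - 1 + 1 = m by omega] at this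
      rw [this]
      congr 1
      omega
    unfold macDown
    have hgm1 : (g m - 1).choose (m - 1) = (c + m).choose (m - 1) := by
      rw [hgm]; congr 1; omega
    rcases Nat.eq_or_lt_of_le hmi with hmeq | hmlt
    · rw [← hmeq, Finset.Icc_self, Finset.sum_singleton, hgm1, e1]
    · rw [sum_Icc_split (fun k => (f k - 1).choose (k - 1)) hm1 hmi,
        sum_Icc_bot (fun k => (g k - 1).choose (k - 1)) hmi, hgm1]
      have e4 : ∑ k ∈ Icc (m+1) i, (g k - 1).choose (k - 1)
          = ∑ k ∈ Icc (m+1) i, (f k - 1).choose (k - 1) := by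
        apply Finset.sum_congr rfl
        intro k hk
        rw [Finset.mem_Icc] at hk
        rw [hgf k (by omega)]
      rw [e4, e1]

end MacHelpers

/-- If `((a+1)_(i))^{-1}_{-1} > (a_(i))^{-1}_{-1}`, then
`((a+1)_(i))^{-1}_{-1} = (a_(i))^{-1}_{-1} + 1`. -/
theorem stmt_6 (i a : ℕ) (hi : 1 ≤ i) (ha : 1 ≤ a)
    (j f j' f' : _) (h1 : IsMacExp a i j f) (h2 : IsMacExp (a + 1) i j' f')
    (hgt : macDown i j f < macDown i j' f') :
    macDown i j' f' = macDown i j f + 1 := by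
  by_cases hj2 : 2 ≤ j
  · obtain ⟨hExp, hmd⟩ := step_case2 h1 hj2
    obtain ⟨hjj, hff⟩ := mac_unique i (a+1) (j-1) _ j' f' hExp h2
    subst hjj
    rw [← macDown_congr hff, hmd]
  · have hj : j = 1 := by obtain ⟨hja, hjb, _⟩ := h1; omega
    subst hj
    obtain ⟨m, g, hExp, hmd⟩ := step_case1 h1
    obtain ⟨hjj, hff⟩ := mac_unique i (a+1) m g j' f' hExp h2
    subst hjj
    rw [← macDown_congr hff, hmd] at hgt
    omega
end

section
/- Let s = (0, s_1, ..., s_e) be a tuple of non-negative integers with s_e > 0, and define h by h_e = s_e and h_i = ((h_{i+1})_(i+1))^{-1}_{-1} + s_i for i = e-1, ..., 1. Then for any O-sequence H = (1, H_1, ..., H_e) that is the h-vector of some artinian algebra with socle-vector s constructed via lex-segment inverse systems, one has H_i ≥ h_i for all i; in particular h_1 = ((...((((s_e)_(e))^{-1}_{-1} + s_{e-1})_(e-1))^{-1}_{-1} + s_{e-2} ...)_(2))^{-1}_{-1} + s_1 is the minimum codimension: any valid h-vector with maximum socle-vector (as computed by s_i = h_i - ((h_{i+1})_(i+1))^{-1}_{-1})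 at least s entrywise satisfies H_1 ≥ h_1. -/
lemma choose_split (a b : ℕ) (ha : 1 ≤ a) (hb : 1 ≤ b) :
    a.choose b = (a - 1).choose (b - 1) + (a - 1).choose b := by
  obtain ⟨a', rfl⟩ : ∃ a', a = a' + 1 := ⟨a - 1, by omega⟩
  obtain ⟨b', rfl⟩ : ∃ b', b = b' + 1 := ⟨b - 1, by omega⟩
  simp [Nat.choose_succ_succ']

lemma sum_lt_choose {j : ℕ} (hj : 1 ≤ j) :
    ∀ i, j ≤ i → ∀ f : ℕ → ℕ, (∀ k, j ≤ k → k < i → f k < f (k + 1)) → j ≤ f j →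
    ∑ k ∈ Finset.Icc j i, (f k).choose k < (f i + 1).choose i := by
  intro i hji
  induction i, hji using Nat.le_induction with
  | base =>
    intro f _ hfj
    rw [Finset.Icc_self, Finset.sum_singleton]
    have h1 : (f j + 1).choose j = (f j + 1 - 1).choose (j - 1) + (f j + 1 - 1).choose j :=
      choose_split _ _ (by omega) hj
    simp only [Nat.add_sub_cancel] at h1
    have h2 : 0 < (f j).choose (j - 1) := Nat.choose_pos (by omega)
    omega
  | succ i hji ih =>
    intro f hmono hfj
    rw [Finset.sum_Icc_succ_top (by omega)]
    have h1 := ih f (fun k hk hk' => hmono k hk (by omega)) hfj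
    have h2 : f i + 1 ≤ f (i + 1) := hmono i hji (by omega)
    have h3 : (f i + 1).choose i ≤ (f (i + 1)).choose i := Nat.choose_le_choose i h2
    have h4 : (f (i + 1) + 1).choose (i + 1) = (f (i + 1)).choose i + (f (i + 1)).choose (i + 1) :=
      Nat.choose_succ_succ' _ _
    omega

lemma macDown_le {j : ℕ} (hj : 1 ≤ j) :
    ∀ i, j ≤ i → ∀ f : ℕ → ℕ, (∀ k, j ≤ k → k < i → f k < f (k + 1)) →
    macDown i j f ≤ (f i).choose (i - 1) := by
  intro i hji
  induction i, hji using Nat.le_induction with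
  | base =>
    intro f _
    rw [macDown, Finset.Icc_self, Finset.sum_singleton]
    exact Nat.choose_le_choose _ (by omega)
  | succ i hji ih =>
    intro f hmono
    have h1 := ih f (fun k hk hk' => hmono k hk (by omega))
    have h2 : f i + 1 ≤ f (i + 1) := hmono i hji (by omega)
    have h3 : (f (i + 1)).choose i = (f (i + 1) - 1).choose (i - 1) + (f (i + 1) - 1).choose i :=
      choose_split _ _ (by omega) (by omega)
    have h4 : (f i).choose (i - 1) ≤ (f (i + 1) - 1).choose (i - 1) :=
      Nat.choose_le_choose _ (by omega)
    simp only [macDown] at h1 ⊢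
    rw [Finset.sum_Icc_succ_top (by omega)]
    simp only [Nat.add_sub_cancel]
    omega

lemma exp_top_le {n i j : ℕ} {f : ℕ → ℕ} (h : IsMacExp n i j f) : (f i).choose i ≤ n := by
  obtain ⟨h1, h2, h3, h4, h5⟩ := h
  rw [h5]
  exact Finset.single_le_sum (f := fun k => (f k).choose k) (fun k _ => Nat.zero_le _)
    (Finset.mem_Icc.mpr ⟨h2, le_rfl⟩)

lemma exp_bot_le {n i j : ℕ} {f : ℕ → ℕ} (h : IsMacExp n i j f) : (f j).choose j ≤ n := by
  obtain ⟨h1, h2, h3, h4, h5⟩ := h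
  rw [h5]
  exact Finset.single_le_sum (f := fun k => (f k).choose k) (fun k _ => Nat.zero_le _)
    (Finset.mem_Icc.mpr ⟨le_rfl, h2⟩)

lemma exp_pos {n i j : ℕ} {f : ℕ → ℕ} (h : IsMacExp n i j f) : 1 ≤ n := by
  have h1 := exp_bot_le h
  have h2 := Nat.choose_pos h.2.2.1
  omega

lemma exp_lt {n i j : ℕ} {f : ℕ → ℕ} (h : IsMacExp n i j f) : n < (f i + 1).choose i := by
  obtain ⟨h1, h2, h3, h4, h5⟩ := h
  rw [h5]
  exact sum_lt_choose h1 i h2 f h4 h3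

lemma macDown_top_le {n i j : ℕ} {f : ℕ → ℕ} (h : IsMacExp n i j f) :
    (f i - 1).choose (i - 1) ≤ macDown i j f := by
  rw [macDown]
  exact Finset.single_le_sum (f := fun k => (f k - 1).choose (k - 1)) (fun k _ => Nat.zero_le _)
    (Finset.mem_Icc.mpr ⟨h.2.1, le_rfl⟩)

lemma macDown_pos {n i j : ℕ} {f : ℕ → ℕ} (h : IsMacExp n i j f) : 1 ≤ macDown i j f := by
  obtain ⟨h1, h2, h3, h4, h5⟩ := h
  have hb : (f j - 1).choose (j - 1) ≤ macDown i j f := by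
    rw [macDown]
    exact Finset.single_le_sum (f := fun k => (f k - 1).choose (k - 1)) (fun k _ => Nat.zero_le _)
      (Finset.mem_Icc.mpr ⟨le_rfl, h2⟩)
  have : 0 < (f j - 1).choose (j - 1) := Nat.choose_pos (by omega)
  omega

lemma mono_macDown :
    ∀ i, 1 ≤ i → ∀ a b j j' : ℕ, ∀ f g : ℕ → ℕ, IsMacExp a i j f → IsMacExp b i j' g →
      a ≤ b → macDown i j f ≤ macDown i j' g := by
  intro i hi
  induction i, hi using Nat.le_induction with
  | base =>
    intro a b j j' f g hf hg hab
    obtain ⟨hf1, hf2, _, _, _⟩ := hf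
    obtain ⟨hg1, hg2, _, _, _⟩ := hg
    have hj : j = 1 := by omega
    have hj' : j' = 1 := by omega
    subst hj hj'
    simp [macDown, Finset.Icc_self]
  | succ i hi ih =>
    intro a b j j' f g hf hg hab
    have hTU : f (i + 1) ≤ g (i + 1) := by
      by_contra hc
      push_neg at hc
      have h1 : b < (g (i + 1) + 1).choose (i + 1) := exp_lt hg
      have h2 : (g (i + 1) + 1).choose (i + 1) ≤ (f (i + 1)).choose (i + 1) :=
        Nat.choose_le_choose _ (by omega)
      have h3 := exp_top_le hf
      omega
    rcases Nat.eq_or_lt_of_le hTU with hEq | hLt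
    · obtain ⟨hf1, hf2, hf3, hf4, hf5⟩ := hf
      obtain ⟨hg1, hg2, hg3, hg4, hg5⟩ := hg
      by_cases hjf : j = i + 1
      · subst hjf
        rw [macDown, Finset.Icc_self, Finset.sum_singleton, hEq]
        exact Finset.single_le_sum (f := fun k => (g k - 1).choose (k - 1))
          (fun k _ => Nat.zero_le _) (Finset.mem_Icc.mpr ⟨hg2, le_rfl⟩)
      · by_cases hjg : j' = i + 1
        · exfalso
          subst hjg
          rw [Finset.Icc_self, Finset.sum_singleton] at hg5
          have hsplit : a = (∑ k ∈ Finset.Icc j i, (f k).choose k) + (f (i + 1)).choose (i + 1) := by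
            rw [hf5, Finset.sum_Icc_succ_top (by omega)]
          have hbot : (f j).choose j ≤ ∑ k ∈ Finset.Icc j i, (f k).choose k :=
            Finset.single_le_sum (f := fun k => (f k).choose k) (fun k _ => Nat.zero_le _)
              (Finset.mem_Icc.mpr ⟨le_rfl, by omega⟩)
          have := Nat.choose_pos hf3
          rw [hEq] at hsplit
          omega
        · have hji : j ≤ i := by omega
          have hji' : j' ≤ i := by omega
          set c := (f (i + 1)).choose (i + 1) with hc
          have hgc : (g (i + 1)).choose (i + 1) = c := by rw [hc, hEq]
          have hf' : IsMacExp (a - c) i j f :=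
            ⟨hf1, hji, hf3, fun k hk hk' => hf4 k hk (by omega), by
              rw [hf5, Finset.sum_Icc_succ_top (by omega)]; omega⟩
          have hg' : IsMacExp (b - c) i j' g :=
            ⟨hg1, hji', hg3, fun k hk hk' => hg4 k hk (by omega), by
              rw [hg5, Finset.sum_Icc_succ_top (by omega), hgc]; omega⟩
          have hab' : a - c ≤ b - c := Nat.sub_le_sub_right hab c
          have hkey := ih (a - c) (b - c) j j' f g hf' hg' hab'
          simp only [macDown] at hkey ⊢
          rw [Finset.sum_Icc_succ_top (show j ≤ i + 1 by omega),
              Finset.sum_Icc_succ_top (show j' ≤ i + 1 by omega), hEq]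
          omega
    · have h1 : macDown (i + 1) j f ≤ (f (i + 1)).choose ((i + 1) - 1) :=
        macDown_le hf.1 (i + 1) hf.2.1 f hf.2.2.2.1
      have h2 : (f (i + 1)).choose i ≤ (g (i + 1) - 1).choose i :=
        Nat.choose_le_choose _ (by omega)
      have h3 : (g (i + 1) - 1).choose ((i + 1) - 1) ≤ macDown (i + 1) j' g := macDown_top_le hg
      simp only [Nat.add_sub_cancel] at h1 h3
      omega

lemma choose_lb (i : ℕ) : ∀ a, i + 1 ≤ a → a - i ≤ a.choose (i + 1) := by
  intro a ha
  induction a, ha using Nat.le_induction with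
  | base =>
    have : (i + 1).choose (i + 1) = 1 := Nat.choose_self _
    omega
  | succ a ha ih =>
    have h1 : (a + 1).choose (i + 1) = a.choose i + a.choose (i + 1) := Nat.choose_succ_succ _ _
    have h2 : 0 < a.choose i := Nat.choose_pos (by omega)
    omega

lemma exists_exp : ∀ i, 1 ≤ i → ∀ n, 1 ≤ n → ∃ j f, IsMacExp n i j f := by
  intro i hi
  induction i, hi using Nat.le_induction with
  | base =>
    intro n hn
    exact ⟨1, fun _ => n, le_refl 1, le_refl 1, hn, fun k hk hk' => by omega, by
      simp [Finset.Icc_self, Nat.choose_one_right]⟩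
  | succ i hi ih =>
    intro n hn
    set P : ℕ → Prop := fun m => m.choose (i + 1) ≤ n with hP
    set m := Nat.findGreatest P (n + i) with hm
    have hPi : P (i + 1) := by
      show (i + 1).choose (i + 1) ≤ n
      rw [Nat.choose_self]; omega
    have him : i + 1 ≤ m := Nat.le_findGreatest (by omega) hPi
    have hPm : m.choose (i + 1) ≤ n := Nat.findGreatest_spec (m := i + 1) (by omega) hPi
    have hmax : n < (m + 1).choose (i + 1) := by
      by_cases hb : m + 1 ≤ n + i
      · have := Nat.findGreatest_is_greatest (P := P) (by omega) hb
        simp only [hP] at this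
        omega
      · have := choose_lb i (m + 1) (by omega)
        omega
    set r := n - m.choose (i + 1) with hr
    rcases Nat.eq_zero_or_pos r with h0 | hpos
    · refine ⟨i + 1, fun _ => m, by omega, le_refl _, him, fun k hk hk' => by omega, ?_⟩
      rw [Finset.Icc_self, Finset.sum_singleton]
      show n = m.choose (i + 1)
      omega
    · have hrlt : r < m.choose i := by
        have : (m + 1).choose (i + 1) = m.choose i + m.choose (i + 1) := Nat.choose_succ_succ _ _
        omega
      obtain ⟨j, g, hg⟩ := ih r hpos
      obtain ⟨hg1, hg2, hg3, hg4, hg5⟩ := hg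
      have hgi : g i < m := by
        have h1 : (g i).choose i ≤ r := exp_top_le ⟨hg1, hg2, hg3, hg4, hg5⟩
        by_contra hcon
        push_neg at hcon
        have := Nat.choose_le_choose i hcon
        omega
      refine ⟨j, fun k => if k = i + 1 then m else g k, hg1, by omega, ?_, ?_, ?_⟩
      · show (if j = i + 1 then m else g j) ≥ j
        rw [if_neg (show ¬ j = i + 1 by omega)]
        exact hg3
      · intro k hk hk'
        show (if k = i + 1 then m else g k) < (if k + 1 = i + 1 then m else g (k + 1))
        by_cases hki : k = i
        · rw [if_neg (show ¬ k = i + 1 by omega), if_pos (show k + 1 = i + 1 by omega)]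
          subst hki
          exact hgi
        · rw [if_neg (show ¬ k = i + 1 by omega), if_neg (show ¬ k + 1 = i + 1 by omega)]
          exact hg4 k hk (by omega)
      · rw [Finset.sum_Icc_succ_top (show j ≤ i + 1 by omega)]
        have hb : ((fun k => if k = i + 1 then m else g k) (i + 1)).choose (i + 1)
            = m.choose (i + 1) := by norm_num
        have hcongr : ∑ k ∈ Finset.Icc j i,
            ((if k = i + 1 then m else g k).choose k) = ∑ k ∈ Finset.Icc j i, (g k).choose k := by
          apply Finset.sum_congr rfl
          intro k hk
          simp only [Finset.mem_Icc] at hk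
          rw [if_neg (by omega)]
        rw [hb, hcongr, ← hg5]
        omega

/-- Minimality of the `h`-vector constructed from a socle-vector `s`: if `H` is any
O-sequence with `H_e = s_e` and `H_i ≥ ((H_{i+1})_(i+1))^{-1}_{-1} + s_i` for all
`1 ≤ i ≤ e - 1`, then `H_i ≥ h_i` for all `i`, where `h` is defined by `h_e = s_e` and
`h_i = ((h_{i+1})_(i+1))^{-1}_{-1} + s_i`. In particular `h_1` is the minimum codimension. -/
theorem stmt_19 (e : ℕ) (he : 1 ≤ e) (s h H : ℕ → ℕ)
    (hs0 : s 0 = 0) (hse : 1 ≤ s e)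
    (hhe : h e = s e)
    (hrec : ∀ i, 1 ≤ i → i + 1 ≤ e → ∀ j f, IsMacExp (h (i + 1)) (i + 1) j f →
      h i = macDown (i + 1) j f + s i)
    (hH0 : H 0 = 1) (hHpos : ∀ i ≤ e, 1 ≤ H i)
    (hHmac : ∀ d, 1 ≤ d → d + 1 ≤ e → ∀ j f, IsMacExp (H d) d j f →
      H (d + 1) ≤ macUp d j f)
    (hHe : H e = s e)
    (hHrec : ∀ i, 1 ≤ i → i + 1 ≤ e → ∀ j f, IsMacExp (H (i + 1)) (i + 1) j f →
      macDown (i + 1) j f + s i ≤ H i) :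
    ∀ i, 1 ≤ i → i ≤ e → h i ≤ H i := by
  have key : ∀ k, k ≤ e - 1 → 1 ≤ h (e - k) ∧ h (e - k) ≤ H (e - k) := by
    intro k
    induction k with
    | zero =>
      intro _
      simp only [Nat.sub_zero]
      exact ⟨by omega, by omega⟩
    | succ k ih =>
      intro hk
      obtain ⟨hpos, hle⟩ := ih (by omega)
      set i := e - (k + 1) with hi
      have hi1 : 1 ≤ i := by omega
      have hi2 : i + 1 ≤ e := by omega
      have hek : e - k = i + 1 := by omega
      rw [hek] at hpos hle
      obtain ⟨j, f, hf⟩ := exists_exp (i + 1) (by omega) (h (i + 1)) hpos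
      obtain ⟨j', g, hg⟩ := exists_exp (i + 1) (by omega) (H (i + 1)) (hHpos (i + 1) hi2)
      have h1 : h i = macDown (i + 1) j f + s i := hrec i hi1 hi2 j f hf
      have h2 : macDown (i + 1) j' g + s i ≤ H i := hHrec i hi1 hi2 j' g hg
      have h3 : macDown (i + 1) j f ≤ macDown (i + 1) j' g :=
        mono_macDown (i + 1) (by omega) _ _ j j' f g hf hg hle
      have h4 := macDown_pos hf
      exact ⟨by omega, by omega⟩
  intro i hi1 hie
  obtain ⟨-, h2⟩ := key (e - i) (by omega)
  rwa [show e - (e - i) = i from by omega] at h2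
end
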